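/- Let c_k = cos(πk/65) and set v₁ = (2/13)·(c₈ + c₁₈ + c₂₀ − c₂₁ + c₂₅ + c₃₀ − c₃₁), v₂ = (1/13)·(1 − 4c₈ − 4c₁₈ + 2c₂₀ + 4c₂₁ − 4c₂₅ + 2c₃₀ + 4c₃₁), v₃ = (1/13)·(−1 + 2c₈ + 2c₁₈ − 4c₂₀ − 2c₂₁ + 2c₂₅ − 4c₃₀ − 2c₃₁). Then each of v₁, v₂, v₃ is a root of the polynomial 169λ³ − 13λ − 1, and v₁, v₂, v₃ are pairwise distinct (so they are exactly its three roots). -/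
import Mathlib

open Real

/-- `c_k = cos(πk/65)`. -/
noncomputable def c65 (k : ℕ) : ℝ := Real.cos (π * k / 65)

noncomputable def v₁ : ℝ :=
  (2 / 13) * (c65 8 + c65 18 + c65 20 - c65 21 + c65 25 + c65 30 - c65 31)
noncomputable def v₂ : ℝ :=
  (1 / 13) * (1 - 4 * c65 8 - 4 * c65 18 + 2 * c65 20 + 4 * c65 21 -
    4 * c65 25 + 2 * c65 30 + 4 * c65 31)
noncomputable def v₃ : ℝ :=
  (1 / 13) * (-1 + 2 * c65 8 + 2 * c65 18 - 4 * c65 20 - 2 * c65 21 +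
    2 * c65 25 - 4 * c65 30 - 2 * c65 31)

noncomputable def zEH : ℂ := Complex.exp (Real.pi * Complex.I / 65)

lemma zEH_pow_65 : zEH ^ 65 = -1 := by
  rw [zEH, ← Complex.exp_nat_mul]
  rw [show ((65 : ℕ) : ℂ) * (Real.pi * Complex.I / 65) = Real.pi * Complex.I by push_cast; ring]
  exact Complex.exp_pi_mul_I

lemma zEH_pow_130 : zEH ^ 130 = 1 := by
  rw [show (130 : ℕ) = 65 * 2 by norm_num, pow_mul, zEH_pow_65]
  norm_num

lemma c65_complex (k : ℕ) (hk : k ≤ 130) :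
    ((c65 k : ℝ) : ℂ) = (zEH ^ k + zEH ^ (130 - k)) / 2 := by
  have h1 : Complex.exp (Real.pi * (k : ℂ) / 65 * Complex.I) = zEH ^ k := by
    rw [zEH, ← Complex.exp_nat_mul]
    ring_nf
  have h2 : Complex.exp (-(Real.pi * (k : ℂ) / 65 * Complex.I)) = zEH ^ (130 - k) := by
    rw [Complex.exp_neg, h1]
    have hmul : zEH ^ (130 - k) * zEH ^ k = 1 := by
      rw [← pow_add, show 130 - k + k = 130 by omega, zEH_pow_130]
    exact (eq_inv_of_mul_eq_one_left hmul).symm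
  rw [c65, Complex.ofReal_cos, Complex.cos]
  push_cast
  rw [show -(Real.pi * (k:ℂ) / 65) * Complex.I = -(Real.pi * (k : ℂ) / 65 * Complex.I) by ring,
    h1, h2]

lemma sum13 : (1 : ℂ) + zEH ^ 10 + zEH ^ 20 + zEH ^ 30 + zEH ^ 40 + zEH ^ 50 + zEH ^ 60 +
    zEH ^ 70 + zEH ^ 80 + zEH ^ 90 + zEH ^ 100 + zEH ^ 110 + zEH ^ 120 = 0 := by
  have hprim := Complex.isPrimitiveRoot_exp 13 (by norm_num)
  have hz : zEH ^ 10 = Complex.exp (2 * Real.pi * Complex.I / ((13 : ℕ) : ℂ)) := by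
    rw [zEH, ← Complex.exp_nat_mul]
    congr 1
    push_cast
    ring
  have h := hprim.geom_sum_eq_zero (by norm_num)
  rw [← hz] at h
  simp only [Finset.sum_range_succ, Finset.sum_range_zero] at h
  linear_combination h

lemma sum5 : (1 : ℂ) + zEH ^ 26 + zEH ^ 52 + zEH ^ 78 + zEH ^ 104 = 0 := by
  have hprim := Complex.isPrimitiveRoot_exp 5 (by norm_num)
  have hz : zEH ^ 26 = Complex.exp (2 * Real.pi * Complex.I / ((5 : ℕ) : ℂ)) := by
    rw [zEH, ← Complex.exp_nat_mul]
    congr 1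
    push_cast
    ring
  have h := hprim.geom_sum_eq_zero (by norm_num)
  rw [← hz] at h
  simp only [Finset.sum_range_succ, Finset.sum_range_zero] at h
  linear_combination h

lemma v₁_complex : ((v₁ : ℝ) : ℂ) = (2 / 13) * ((zEH^8 + zEH^122)/2 + (zEH^18 + zEH^112)/2
    + (zEH^20 + zEH^110)/2 - (zEH^21 + zEH^109)/2 + (zEH^25 + zEH^105)/2
    + (zEH^30 + zEH^100)/2 - (zEH^31 + zEH^99)/2) := by
  rw [v₁]
  push_cast
  rw [c65_complex 8 (by norm_num), c65_complex 18 (by norm_num), c65_complex 20 (by norm_num),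
    c65_complex 21 (by norm_num), c65_complex 25 (by norm_num), c65_complex 30 (by norm_num),
    c65_complex 31 (by norm_num)]

set_option maxHeartbeats 2000000 in
lemma root_1 : 169 * v₁ ^ 3 - 13 * v₁ - 1 = 0 := by
  have hC : (169 : ℂ) * (((v₁ : ℝ)) : ℂ) ^ 3 - 13 * ((v₁ : ℝ) : ℂ) - 1 = 0 := by
    rw [v₁_complex]
    linear_combination ((1/13)*zEH^301 + (3/13)*zEH^291 + (3/13)*zEH^289 + (-3/13)*zEH^288 + (3/13)*zEH^284 + (3/13)*zEH^281 + (9/13)*zEH^279 + (-9/13)*zEH^278 + (3/13)*zEH^277 + (-6/13)*zEH^276 + (3/13)*zEH^275 + (6/13)*zEH^274 + (6/13)*zEH^272 + (-5/13)*zEH^271 + (9/13)*zEH^269 + (-9/13)*zEH^268 + (12/13)*zEH^267 + (-18/13)*zEH^266 + (10/13)*zEH^265 + (3/13)*zEH^263 + (11/13)*zEH^262 + (-12/13)*zEH^261 + (3/13)*zEH^260 + (-3/13)*zEH^259 + (12/13)*zEH^257 + (-18/13)*zEH^256 + (15/13)*zEH^255 + (-12/13)*zEH^254 + (9/13)*zEH^253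 + (3/13)*zEH^252 + (-6/13)*zEH^251 + (7/13)*zEH^250 + (-12/13)*zEH^249 + (6/13)*zEH^248 + (3/13)*zEH^247 + (-6/13)*zEH^246 + (9/13)*zEH^245 + (-12/13)*zEH^244 + (9/13)*zEH^243 + (-3/13)*zEH^242 + (3/13)*zEH^240 + (-6/13)*zEH^239 + (3/13)*zEH^238 + (-1/13)*zEH^236 + (1/13)*zEH^235 + (-3/13)*zEH^234 + (3/13)*zEH^233 + (-1/13)*zEH^232 + (-3/13)*zEH^226 + (-3/13)*zEH^224 + (3/13)*zEH^223 + (-3/13)*zEH^219 + (-3/13)*zEH^216 + (-9/13)*zEH^214 + (9/13)*zEH^213 + (-3/13)*zEH^212 + (6/13)*zEH^211 + (-6/13)*zEH^210 + (-3/13)*zEH^209 + (-6/13)*zEH^207 + (5/13)*zEH^206 + (-6/13)*zEH^204 + (9/13)*zEH^203 + (-12/13)*zEH^202 + (18/13)*zEH^201 + (-19/13)*zEH^200 + (9/13)*zEH^199 + (-9/13)*zEH^198 + (4/13)*zEH^197 + (6/13)*zEH^196 + (-3/13)*zEH^195 + (9/13)*zEH^194 + (-6/13)*zEH^193 + (12/13)*zEH^191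 + (-24/13)*zEH^190 + (21/13)*zEH^189 + (-27/13)*zEH^188 + (48/13)*zEH^187 + (-15/13)*zEH^186 + (8/13)*zEH^185 + (-15/13)*zEH^183 + (21/13)*zEH^182 + (-12/13)*zEH^181 + (9/13)*zEH^180 + (3/13)*zEH^179 + (-24/13)*zEH^178 + (54/13)*zEH^177 + (-30/13)*zEH^176 + (51/13)*zEH^175 + (-45/13)*zEH^174 + (3/13)*zEH^173 + (6/13)*zEH^172 + (-14/13)*zEH^171 + (44/13)*zEH^170 + (-21/13)*zEH^169 + (3/13)*zEH^168 + (10/13)*zEH^167 + (-18/13)*zEH^166 + (54/13)*zEH^165 + (-51/13)*zEH^164 + (21/13)*zEH^163 + (-18/13)*zEH^162 + (6/13)*zEH^161 + (21/13)*zEH^160 + (-9/13)*zEH^159 + (12/13)*zEH^158 + (-12/13)*zEH^157 + (-3/13)*zEH^156 + (15/13)*zEH^155 + (-12/13)*zEH^154 + (15/13)*zEH^153 + (-18/13)*zEH^152 + (12/13)*zEH^151 + (9/13)*zEH^149 + (-3/13)*zEH^148 + (-3/13)*zEH^147 + (-6/13)*zEH^146 + (6/13)*zEH^145 + (3/13)*zEH^144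 + (3/13)*zEH^143 + (-2/13)*zEH^141 + (6/13)*zEH^139 + (-9/13)*zEH^138 + (12/13)*zEH^137 + (-18/13)*zEH^136 + (19/13)*zEH^135 + (-9/13)*zEH^134 + (9/13)*zEH^133 + (-4/13)*zEH^132 + (-6/13)*zEH^131 + (3/13)*zEH^130 + (-9/13)*zEH^129 + (6/13)*zEH^128 + (-27/13)*zEH^126 + (41/13)*zEH^125 + (-29/13)*zEH^124 + (29/13)*zEH^123 + (-9/13)*zEH^122 + (-87/13)*zEH^121 + (12)*zEH^120 + (-239/13)*zEH^119 + (305/13)*zEH^118 + (-320/13)*zEH^117 + (293/13)*zEH^116 + (-18)*zEH^115 + (134/13)*zEH^114 + (-6)*zEH^113 + (28/13)*zEH^112 + (-55/13)*zEH^111 + (71/13)*zEH^110 + (-8)*zEH^109 + (118/13)*zEH^108 + (-67/13)*zEH^107 + (-16/13)*zEH^106 + (83/13)*zEH^105 + (-14)*zEH^104 + (185/13)*zEH^103 + (-126/13)*zEH^102 + (25/13)*zEH^101 + (45/13)*zEH^100 + (-129/13)*zEH^99 + (153/13)*zEH^98 + (-90/13)*zEH^97 + (1/13)*zEH^96 +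 (24/13)*zEH^95 + (-45/13)*zEH^94 + (-45/13)*zEH^93 + (183/13)*zEH^92 + (-304/13)*zEH^91 + (404/13)*zEH^90 + (-428/13)*zEH^89 + (328/13)*zEH^88 + (-203/13)*zEH^87 + (32/13)*zEH^86 + (62/13)*zEH^85 + (-9)*zEH^84 + (96/13)*zEH^83 + (-4/13)*zEH^82 + (-60/13)*zEH^81 + (90/13)*zEH^80 + (-109/13)*zEH^79 + (21/13)*zEH^78 + (60/13)*zEH^77 + (-122/13)*zEH^76 + (127/13)*zEH^75 + (-149/13)*zEH^74 + (77/13)*zEH^73 + (31/13)*zEH^72 + (-83/13)*zEH^71 + (123/13)*zEH^70 + (-206/13)*zEH^69 + (167/13)*zEH^68 + (-175/13)*zEH^67 + (211/13)*zEH^66 + (-210/13)*zEH^65 + (185/13)*zEH^64 + (-218/13)*zEH^63 + (161/13)*zEH^62 + (-70/13)*zEH^61 + (-2)*zEH^60 + (94/13)*zEH^59 + (-205/13)*zEH^58 + (200/13)*zEH^57 + (-11)*zEH^56 + (62/13)*zEH^55 + (34/13)*zEH^54 + (-138/13)*zEH^53 + (148/13)*zEH^52 + (-9)*zEH^51 +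 (55/13)*zEH^50 + (-8/13)*zEH^49 + (-3)*zEH^48 + (-2)*zEH^47 + (135/13)*zEH^46 + (-245/13)*zEH^45 + (333/13)*zEH^44 + (-404/13)*zEH^43 + (328/13)*zEH^42 + (-211/13)*zEH^41 + (109/13)*zEH^40 + (-4/13)*zEH^39 + (-59/13)*zEH^38 + (-1)*zEH^37 + (86/13)*zEH^36 + (-142/13)*zEH^35 + (13)*zEH^34 + (-144/13)*zEH^33 + (2/13)*zEH^32 + (147/13)*zEH^31 + (-236/13)*zEH^30 + (265/13)*zEH^29 + (-217/13)*zEH^28 + (75/13)*zEH^27 + (73/13)*zEH^26 + (-16)*zEH^25 + (255/13)*zEH^24 + (-258/13)*zEH^23 + (177/13)*zEH^22 + (-79/13)*zEH^21 + (42/13)*zEH^20 + (-42/13)*zEH^19 + (61/13)*zEH^18 + (-185/13)*zEH^17 + (253/13)*zEH^16 + (-22)*zEH^15 + (311/13)*zEH^14 + (-20)*zEH^13 + (160/13)*zEH^12 + (-85/13)*zEH^11 + (12/13)*zEH^10 + (61/13)*zEH^9 + (-103/13)*zEH^8 + (75/13)*zEH^7 + (-73/13)*zEH^6 + (62/13)*zEH^5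 + (-21/13)*zEH^4 + (9/13)*zEH^3 + (2/13)*zEH^2 + (-15/13)*zEH^1 + (6/13)) * zEH_pow_65 +
      ((15/13)*zEH^71 + (-17/13)*zEH^70 + (8/13)*zEH^69 + (-2/13)*zEH^68 + (-3)*zEH^67 + (102/13)*zEH^66 + (-164/13)*zEH^65 + (242/13)*zEH^64 + (-296/13)*zEH^63 + (302/13)*zEH^62 + (-296/13)*zEH^61 + (242/13)*zEH^60 + (-145/13)*zEH^59 + (98/13)*zEH^58 + (-37/13)*zEH^57 + (-17/13)*zEH^56 + (42/13)*zEH^55 + (-84/13)*zEH^54 + (157/13)*zEH^53 + (-226/13)*zEH^52 + (296/13)*zEH^51 + (-337/13)*zEH^50 + (337/13)*zEH^49 + (-296/13)*zEH^48 + (207/13)*zEH^47 + (-8)*zEH^46 + (44/13)*zEH^45 + (25/13)*zEH^44 + (-53/13)*zEH^43 + (53/13)*zEH^42 + (-73/13)*zEH^41 + (121/13)*zEH^40 + (-164/13)*zEH^39 + (242/13)*zEH^38 + (-296/13)*zEH^37 + (302/13)*zEH^36 + (-296/13)*zEH^35 + (242/13)*zEH^34 + (-145/13)*zEH^33 + (98/13)*zEH^32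 + (-37/13)*zEH^31 + (-17/13)*zEH^30 + (42/13)*zEH^29 + (-84/13)*zEH^28 + (157/13)*zEH^27 + (-226/13)*zEH^26 + (296/13)*zEH^25 + (-337/13)*zEH^24 + (337/13)*zEH^23 + (-296/13)*zEH^22 + (207/13)*zEH^21 + (-8)*zEH^20 + (44/13)*zEH^19 + (25/13)*zEH^18 + (-53/13)*zEH^17 + (53/13)*zEH^16 + (-73/13)*zEH^15 + (121/13)*zEH^14 + (-164/13)*zEH^13 + (242/13)*zEH^12 + (-296/13)*zEH^11 + (302/13)*zEH^10 + (-296/13)*zEH^9 + (242/13)*zEH^8 + (-145/13)*zEH^7 + (83/13)*zEH^6 + (-20/13)*zEH^5 + (-40/13)*zEH^4 + (46/13)*zEH^3 + (-36/13)*zEH^2 + (34/13)*zEH^1 + (-19/13)) * sum13 +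
      ((-15/13)*zEH^27 + (17/13)*zEH^26 + (-8/13)*zEH^25 + (2/13)*zEH^24 + (3)*zEH^23 + (-87/13)*zEH^22 + (147/13)*zEH^21 + (-18)*zEH^20 + (294/13)*zEH^19 + (-341/13)*zEH^18 + (383/13)*zEH^17 + (-389/13)*zEH^16 + (379/13)*zEH^15 + (-392/13)*zEH^14 + (378/13)*zEH^13 + (-366/13)*zEH^12 + (347/13)*zEH^11 + (-295/13)*zEH^10 + (235/13)*zEH^9 + (-152/13)*zEH^8 + (70/13)*zEH^7 + (-10/13)*zEH^6 + (-42/13)*zEH^5 + (61/13)*zEH^4 + (-55/13)*zEH^3 + (34/13)*zEH^2 + (-19/13)*zEH^1) * sum5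
  exact_mod_cast hC

lemma v₂_complex : ((v₂ : ℝ) : ℂ) = (1 / 13) * (1 - 4*((zEH^8 + zEH^122)/2) - 4*((zEH^18 + zEH^112)/2)
    + 2*((zEH^20 + zEH^110)/2) + 4*((zEH^21 + zEH^109)/2) - 4*((zEH^25 + zEH^105)/2)
    + 2*((zEH^30 + zEH^100)/2) + 4*((zEH^31 + zEH^99)/2)) := by
  rw [v₂]
  push_cast
  rw [c65_complex 8 (by norm_num), c65_complex 18 (by norm_num), c65_complex 20 (by norm_num),
    c65_complex 21 (by norm_num), c65_complex 25 (by norm_num), c65_complex 30 (by norm_num),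
    c65_complex 31 (by norm_num)]

set_option maxHeartbeats 2000000 in
lemma root_2 : 169 * v₂ ^ 3 - 13 * v₂ - 1 = 0 := by
  have hC : (169 : ℂ) * (((v₂ : ℝ)) : ℂ) ^ 3 - 13 * ((v₂ : ℝ) : ℂ) - 1 = 0 := by
    rw [v₂_complex]
    linear_combination ((-8/13)*zEH^301 + (-24/13)*zEH^291 + (12/13)*zEH^289 + (24/13)*zEH^288 + (-24/13)*zEH^284 + (-24/13)*zEH^281 + (36/13)*zEH^279 + (72/13)*zEH^278 + (-6/13)*zEH^277 + (-24/13)*zEH^276 + (-24/13)*zEH^275 + (-48/13)*zEH^274 + (24/13)*zEH^272 + (40/13)*zEH^271 + (36/13)*zEH^269 + (72/13)*zEH^268 + (-42/13)*zEH^267 + (-72/13)*zEH^266 + (-71/13)*zEH^265 + (-18/13)*zEH^264 + (12/13)*zEH^263 + (56/13)*zEH^262 + (96/13)*zEH^261 + (-6/13)*zEH^260 + (-12/13)*zEH^259 + (-42/13)*zEH^257 + (-72/13)*zEH^256 + (-57/13)*zEH^255 + (42/13)*zEH^254 + (36/13)*zEH^253 + (48/13)*zEH^252 + (48/13)*zEH^251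 + (-20/13)*zEH^250 + (-48/13)*zEH^249 + (-48/13)*zEH^248 + (-6/13)*zEH^247 + (-24/13)*zEH^246 + (-9/13)*zEH^245 + (42/13)*zEH^244 + (36/13)*zEH^243 + (24/13)*zEH^242 + (-6/13)*zEH^240 + (-24/13)*zEH^239 + (-24/13)*zEH^238 + (8/13)*zEH^236 + (1/13)*zEH^235 + (6/13)*zEH^234 + (12/13)*zEH^233 + (8/13)*zEH^232 + (24/13)*zEH^226 + (-12/13)*zEH^224 + (-24/13)*zEH^223 + (24/13)*zEH^219 + (24/13)*zEH^216 + (-36/13)*zEH^214 + (-72/13)*zEH^213 + (6/13)*zEH^212 + (24/13)*zEH^211 + (48/13)*zEH^210 + (60/13)*zEH^209 + (-24/13)*zEH^207 + (-40/13)*zEH^206 + (-60/13)*zEH^204 + (-72/13)*zEH^203 + (42/13)*zEH^202 + (72/13)*zEH^201 + (11)*zEH^200 + (54/13)*zEH^199 + (-36/13)*zEH^198 + (-140/13)*zEH^197 + (-120/13)*zEH^196 + (6/13)*zEH^195 + (-36/13)*zEH^194 + (48/13)*zEH^193 + (90/13)*zEH^192 + (120/13)*zEH^191 + (129/13)*zEH^190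 + (-6/13)*zEH^189 + (-108/13)*zEH^188 + (-348/13)*zEH^187 + (-114/13)*zEH^186 + (71/13)*zEH^185 + (108/13)*zEH^184 + (12)*zEH^183 + (102/13)*zEH^182 + (96/13)*zEH^181 + (-81/13)*zEH^180 + (-66/13)*zEH^179 + (-132/13)*zEH^178 + (-324/13)*zEH^177 + (-30/13)*zEH^176 + (15)*zEH^175 + (324/13)*zEH^174 + (102/13)*zEH^173 + (24/13)*zEH^172 + (-32/13)*zEH^171 + (-253/13)*zEH^170 + (-6)*zEH^169 + (-60/13)*zEH^168 + (-56/13)*zEH^167 + (-6/13)*zEH^166 + (189/13)*zEH^165 + (300/13)*zEH^164 + (-6/13)*zEH^163 + (-48/13)*zEH^162 + (-120/13)*zEH^161 + (-114/13)*zEH^160 + (-24/13)*zEH^159 + (48/13)*zEH^158 + (72/13)*zEH^157 + (-42/13)*zEH^156 + (54/13)*zEH^155 + (72/13)*zEH^154 + (-18/13)*zEH^153 + (-48/13)*zEH^152 + (-96/13)*zEH^151 + (-12/13)*zEH^150 + (12/13)*zEH^149 + (96/13)*zEH^148 + (30/13)*zEH^147 + (-48/13)*zEH^146 + (-30/13)*zEH^145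 + (-36/13)*zEH^144 + (18/13)*zEH^143 + (16/13)*zEH^141 + (-12/13)*zEH^140 + (36/13)*zEH^139 + (72/13)*zEH^138 + (-42/13)*zEH^137 + (-72/13)*zEH^136 + (-140/13)*zEH^135 + (-42/13)*zEH^134 + (48/13)*zEH^133 + (140/13)*zEH^132 + (120/13)*zEH^131 + (-6/13)*zEH^130 + (36/13)*zEH^129 + (-48/13)*zEH^128 + (-90/13)*zEH^127 + (12/13)*zEH^126 + (-157/13)*zEH^125 + (16/13)*zEH^124 + (-172/13)*zEH^123 + (279/13)*zEH^122 + (291/13)*zEH^121 + (36/13)*zEH^120 + (388/13)*zEH^119 + (-790/13)*zEH^118 + (-2)*zEH^117 + (-574/13)*zEH^116 + (573/13)*zEH^115 + (302/13)*zEH^114 + (90/13)*zEH^113 + (301/13)*zEH^112 + (-13)*zEH^111 + (-16/13)*zEH^110 + (-110/13)*zEH^109 + (-38)*zEH^108 + (-229/13)*zEH^107 + (248/13)*zEH^106 + (332/13)*zEH^105 + (784/13)*zEH^104 + (-544/13)*zEH^103 + (171/13)*zEH^102 + (-161/13)*zEH^101 + (-24/13)*zEH^100 + (276/13)*zEH^99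 + (-756/13)*zEH^98 + (-147/13)*zEH^97 + (232/13)*zEH^96 + (627/13)*zEH^95 + (849/13)*zEH^94 + (-264/13)*zEH^93 + (-639/13)*zEH^92 + (-7)*zEH^91 + (-49)*zEH^90 + (1096/13)*zEH^89 + (-446/13)*zEH^88 + (115/13)*zEH^87 + (230/13)*zEH^86 + (149/13)*zEH^85 + (837/13)*zEH^84 + (-810/13)*zEH^83 + (-331/13)*zEH^82 + (-282/13)*zEH^81 + (219/13)*zEH^80 + (836/13)*zEH^79 + (30/13)*zEH^78 + (-525/13)*zEH^77 + (28/13)*zEH^76 + (145/13)*zEH^75 + (889/13)*zEH^74 + (-400/13)*zEH^73 + (-605/13)*zEH^72 + (-224/13)*zEH^71 + (147/13)*zEH^70 + (1090/13)*zEH^69 + (83/13)*zEH^68 + (-193/13)*zEH^67 + (-914/13)*zEH^66 + (276/13)*zEH^65 + (323/13)*zEH^64 + (724/13)*zEH^63 + (-262/13)*zEH^62 + (-295/13)*zEH^61 + (79/13)*zEH^60 + (-44/13)*zEH^59 + (881/13)*zEH^58 + (-646/13)*zEH^57 + (-35/13)*zEH^56 + (-376/13)*zEH^55 + (277/13)*zEH^54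 + (738/13)*zEH^53 + (-266/13)*zEH^52 + (57/13)*zEH^51 + (-227/13)*zEH^50 + (154/13)*zEH^49 + (519/13)*zEH^48 + (-389/13)*zEH^47 + (-549/13)*zEH^46 + (148/13)*zEH^45 + (45/13)*zEH^44 + (1354/13)*zEH^43 + (-434/13)*zEH^42 + (-19)*zEH^41 + (-554/13)*zEH^40 + (-250/13)*zEH^39 + (889/13)*zEH^38 + (-127/13)*zEH^37 + (-157/13)*zEH^36 + (-40/13)*zEH^35 + (-62/13)*zEH^34 + (738/13)*zEH^33 + (8)*zEH^32 + (-633/13)*zEH^31 + (37/13)*zEH^30 + (-56)*zEH^29 + (911/13)*zEH^28 + (-105/13)*zEH^27 + (-161/13)*zEH^26 + (350/13)*zEH^25 + (-414/13)*zEH^24 + (888/13)*zEH^23 + (-282/13)*zEH^22 + (-376/13)*zEH^21 + (-477/13)*zEH^20 + (-180/13)*zEH^19 + (775/13)*zEH^18 + (511/13)*zEH^17 + (-329/13)*zEH^16 + (14/13)*zEH^15 + (-742/13)*zEH^14 + (484/13)*zEH^13 + (94/13)*zEH^12 + (-46/13)*zEH^11 + (-87/13)*zEH^10 + (-380/13)*zEH^9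 + (668/13)*zEH^8 + (-105/13)*zEH^7 + (209/13)*zEH^6 + (-28)*zEH^5 + (-138/13)*zEH^4 + (-18/13)*zEH^3 + (8)*zEH^2 + (132/13)*zEH^1 + (-144/13)) * zEH_pow_65 +
      ((-132/13)*zEH^71 + (28/13)*zEH^70 + (-10/13)*zEH^69 + (280/13)*zEH^68 + (69/13)*zEH^67 + (-177/13)*zEH^66 + (-107/13)*zEH^65 + (-40)*zEH^64 + (610/13)*zEH^63 + (-82/13)*zEH^62 + (610/13)*zEH^61 + (-40)*zEH^60 + (-226/13)*zEH^59 + (-190/13)*zEH^58 + (-22/13)*zEH^57 + (376/13)*zEH^56 + (-72/13)*zEH^55 + (18)*zEH^54 + (-290/13)*zEH^53 + (257/13)*zEH^52 + (-610/13)*zEH^51 + (464/13)*zEH^50 + (-464/13)*zEH^49 + (610/13)*zEH^48 + (-138/13)*zEH^47 + (-80/13)*zEH^46 + (-100/13)*zEH^45 + (-386/13)*zEH^44 + (370/13)*zEH^43 + (14/13)*zEH^42 + (320/13)*zEH^41 + (-296/13)*zEH^40 + (-107/13)*zEH^39 + (-40)*zEH^38 + (610/13)*zEH^37 + (-82/13)*zEH^36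 + (610/13)*zEH^35 + (-40)*zEH^34 + (-226/13)*zEH^33 + (-190/13)*zEH^32 + (-22/13)*zEH^31 + (376/13)*zEH^30 + (-72/13)*zEH^29 + (18)*zEH^28 + (-290/13)*zEH^27 + (257/13)*zEH^26 + (-610/13)*zEH^25 + (464/13)*zEH^24 + (-464/13)*zEH^23 + (610/13)*zEH^22 + (-138/13)*zEH^21 + (-80/13)*zEH^20 + (-100/13)*zEH^19 + (-386/13)*zEH^18 + (370/13)*zEH^17 + (14/13)*zEH^16 + (320/13)*zEH^15 + (-296/13)*zEH^14 + (-107/13)*zEH^13 + (-40)*zEH^12 + (610/13)*zEH^11 + (-82/13)*zEH^10 + (610/13)*zEH^9 + (-40)*zEH^8 + (-226/13)*zEH^7 + (-58/13)*zEH^6 + (-50/13)*zEH^5 + (518/13)*zEH^4 + (-248/13)*zEH^3 + (147/13)*zEH^2 + (-251/13)*zEH^1 + (119/13)) * sum13 +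
      ((132/13)*zEH^27 + (-28/13)*zEH^26 + (10/13)*zEH^25 + (-280/13)*zEH^24 + (-69/13)*zEH^23 + (45/13)*zEH^22 + (135/13)*zEH^21 + (510/13)*zEH^20 + (-330/13)*zEH^19 + (151/13)*zEH^18 + (-655/13)*zEH^17 + (385/13)*zEH^16 + (-284/13)*zEH^15 + (40)*zEH^14 + (-129/13)*zEH^13 + (279/13)*zEH^12 + (-313/13)*zEH^11 + (50/13)*zEH^10 + (-230/13)*zEH^9 + (-128/13)*zEH^8 + (331/13)*zEH^7 + (-151/13)*zEH^6 + (414/13)*zEH^5 + (-380/13)*zEH^4 + (266/13)*zEH^3 + (-251/13)*zEH^2 + (119/13)*zEH^1) * sum5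
  exact_mod_cast hC

lemma v₃_complex : ((v₃ : ℝ) : ℂ) = (1 / 13) * (-1 + 2*((zEH^8 + zEH^122)/2) + 2*((zEH^18 + zEH^112)/2)
    - 4*((zEH^20 + zEH^110)/2) - 2*((zEH^21 + zEH^109)/2) + 2*((zEH^25 + zEH^105)/2)
    - 4*((zEH^30 + zEH^100)/2) - 2*((zEH^31 + zEH^99)/2)) := by
  rw [v₃]
  push_cast
  rw [c65_complex 8 (by norm_num), c65_complex 18 (by norm_num), c65_complex 20 (by norm_num),
    c65_complex 21 (by norm_num), c65_complex 25 (by norm_num), c65_complex 30 (by norm_num),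
    c65_complex 31 (by norm_num)]

set_option maxHeartbeats 2000000 in
lemma root_3 : 169 * v₃ ^ 3 - 13 * v₃ - 1 = 0 := by
  have hC : (169 : ℂ) * (((v₃ : ℝ)) : ℂ) ^ 3 - 13 * ((v₃ : ℝ) : ℂ) - 1 = 0 := by
    rw [v₃_complex]
    linear_combination ((1/13)*zEH^301 + (3/13)*zEH^291 + (-6/13)*zEH^289 + (-3/13)*zEH^288 + (3/13)*zEH^284 + (3/13)*zEH^281 + (-18/13)*zEH^279 + (-9/13)*zEH^278 + (12/13)*zEH^277 + (12/13)*zEH^276 + (3/13)*zEH^275 + (6/13)*zEH^274 + (-12/13)*zEH^272 + (-5/13)*zEH^271 + (-18/13)*zEH^269 + (-9/13)*zEH^268 + (3)*zEH^267 + (36/13)*zEH^266 + (1/13)*zEH^265 + (-9/13)*zEH^264 + (-6/13)*zEH^263 + (-25/13)*zEH^262 + (-12/13)*zEH^261 + (12/13)*zEH^260 + (6/13)*zEH^259 + (3)*zEH^257 + (36/13)*zEH^256 + (-21/13)*zEH^255 + (-3)*zEH^254 + (-18/13)*zEH^253 + (-15/13)*zEH^252 + (-6/13)*zEH^251 + (25/13)*zEH^250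 + (24/13)*zEH^249 + (6/13)*zEH^248 + (12/13)*zEH^247 + (12/13)*zEH^246 + (-27/13)*zEH^245 + (-3)*zEH^244 + (-18/13)*zEH^243 + (-3/13)*zEH^242 + (12/13)*zEH^240 + (12/13)*zEH^239 + (3/13)*zEH^238 + (-1/13)*zEH^236 + (-8/13)*zEH^235 + (-12/13)*zEH^234 + (-6/13)*zEH^233 + (-1/13)*zEH^232 + (-3/13)*zEH^226 + (6/13)*zEH^224 + (3/13)*zEH^223 + (-3/13)*zEH^219 + (-3/13)*zEH^216 + (18/13)*zEH^214 + (9/13)*zEH^213 + (-12/13)*zEH^212 + (-12/13)*zEH^211 + (-6/13)*zEH^210 + (-12/13)*zEH^209 + (12/13)*zEH^207 + (5/13)*zEH^206 + (21/13)*zEH^204 + (9/13)*zEH^203 + (-3)*zEH^202 + (-36/13)*zEH^201 + (-10/13)*zEH^200 + (-9/13)*zEH^199 + (18/13)*zEH^198 + (58/13)*zEH^197 + (24/13)*zEH^196 + (-12/13)*zEH^195 + (-6/13)*zEH^193 + (-63/13)*zEH^192 + (-42/13)*zEH^191 + (12/13)*zEH^190 + (21/13)*zEH^189 + (54/13)*zEH^188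 + (120/13)*zEH^187 + (30/13)*zEH^186 + (-73/13)*zEH^185 + (-54/13)*zEH^184 + (-24/13)*zEH^183 + (-60/13)*zEH^182 + (-12/13)*zEH^181 + (72/13)*zEH^180 + (54/13)*zEH^179 + (57/13)*zEH^178 + (108/13)*zEH^177 + (-3/13)*zEH^176 + (-174/13)*zEH^175 + (-9)*zEH^174 + (-15/13)*zEH^173 + (-12/13)*zEH^172 + (22/13)*zEH^171 + (107/13)*zEH^170 + (54/13)*zEH^169 + (12/13)*zEH^168 + (40/13)*zEH^167 + (-21/13)*zEH^166 + (-162/13)*zEH^165 + (-105/13)*zEH^164 + (21/13)*zEH^163 + (30/13)*zEH^162 + (24/13)*zEH^161 + (48/13)*zEH^160 + (15/13)*zEH^159 + (-24/13)*zEH^158 + (12/13)*zEH^157 + (-60/13)*zEH^155 + (-42/13)*zEH^154 + (30/13)*zEH^153 + (30/13)*zEH^152 + (12/13)*zEH^151 + (12/13)*zEH^150 + (-12/13)*zEH^149 + (-21/13)*zEH^148 + (18/13)*zEH^147 + (18/13)*zEH^146 + (-21/13)*zEH^145 + (-12/13)*zEH^144 + (6/13)*zEH^143 + (-2/13)*zEH^141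 + (12/13)*zEH^140 + (-15/13)*zEH^139 + (-9/13)*zEH^138 + (3)*zEH^137 + (36/13)*zEH^136 + (-2/13)*zEH^135 + (-3/13)*zEH^134 + (-21/13)*zEH^133 + (-58/13)*zEH^132 + (-24/13)*zEH^131 + (12/13)*zEH^130 + (6/13)*zEH^128 + (63/13)*zEH^127 + (42/13)*zEH^126 + (-76/13)*zEH^125 + (79/13)*zEH^124 + (-121/13)*zEH^123 + (-27/13)*zEH^122 + (-150/13)*zEH^121 + (87/13)*zEH^120 + (-2/13)*zEH^119 + (86/13)*zEH^118 + (178/13)*zEH^117 + (62/13)*zEH^116 + (-15)*zEH^115 + (-43/13)*zEH^114 + (-147/13)*zEH^113 + (-101/13)*zEH^112 + (122/13)*zEH^111 + (-49/13)*zEH^110 + (235/13)*zEH^109 + (-89/13)*zEH^108 + (230/13)*zEH^107 + (-55/13)*zEH^106 + (-301/13)*zEH^105 + (-32/13)*zEH^104 + (-58/13)*zEH^103 + (-18/13)*zEH^102 + (148/13)*zEH^101 + (-3)*zEH^100 + (96/13)*zEH^99 + (81/13)*zEH^98 + (-33/13)*zEH^97 + (67/13)*zEH^96 + (-579/13)*zEH^95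 + (6/13)*zEH^94 + (-42/13)*zEH^93 + (87/13)*zEH^92 + (257/13)*zEH^91 + (-40/13)*zEH^90 + (-2)*zEH^89 + (-59/13)*zEH^88 + (-71/13)*zEH^87 + (5/13)*zEH^86 + (-304/13)*zEH^85 + (-180/13)*zEH^84 + (201/13)*zEH^83 + (-82/13)*zEH^82 + (288/13)*zEH^81 + (-183/13)*zEH^80 + (-100/13)*zEH^79 + (-42/13)*zEH^78 + (15/13)*zEH^77 + (106/13)*zEH^76 + (-242/13)*zEH^75 + (-188/13)*zEH^74 + (50/13)*zEH^73 + (100/13)*zEH^72 + (31/13)*zEH^71 + (-36/13)*zEH^70 + (-332/13)*zEH^69 + (17/13)*zEH^68 + (14/13)*zEH^67 + (202/13)*zEH^66 + (-66/13)*zEH^65 + (-277/13)*zEH^64 + (-17/13)*zEH^63 + (-118/13)*zEH^62 + (128/13)*zEH^61 + (-50/13)*zEH^60 + (-110/13)*zEH^59 + (-94/13)*zEH^58 + (-7/13)*zEH^57 + (64/13)*zEH^56 + (77/13)*zEH^55 + (-245/13)*zEH^54 + (-51/13)*zEH^53 + (-59/13)*zEH^52 + (-75/13)*zEH^51 + (229/13)*zEH^50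 + (-251/13)*zEH^49 + (105/13)*zEH^48 + (-86/13)*zEH^47 + (90/13)*zEH^46 + (55/13)*zEH^45 + (-315/13)*zEH^44 + (-128/13)*zEH^43 + (-62/13)*zEH^42 + (14/13)*zEH^41 + (331/13)*zEH^40 + (-100/13)*zEH^39 + (-134/13)*zEH^38 + (74/13)*zEH^37 + (-148/13)*zEH^36 + (242/13)*zEH^35 + (-329/13)*zEH^34 + (-45/13)*zEH^33 + (-64/13)*zEH^32 + (-18/13)*zEH^31 + (346/13)*zEH^30 + (-5)*zEH^29 + (-121/13)*zEH^28 + (30/13)*zEH^27 + (-89/13)*zEH^26 + (2)*zEH^25 + (-3)*zEH^24 + (-162/13)*zEH^23 + (150/13)*zEH^22 + (-97/13)*zEH^21 + (372/13)*zEH^20 + (-93/13)*zEH^19 + (-17)*zEH^18 + (-53/13)*zEH^17 + (-92/13)*zEH^16 + (116/13)*zEH^15 + (50/13)*zEH^14 + (-5/13)*zEH^13 + (-89/13)*zEH^12 + (47/13)*zEH^11 + (111/13)*zEH^10 + (106/13)*zEH^9 + (-235/13)*zEH^8 + (30/13)*zEH^7 + (-94/13)*zEH^6 + (5)*zEH^5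 + (33/13)*zEH^4 + (36/13)*zEH^3 + (-64/13)*zEH^2 + (102/13)) * zEH_pow_65 +
      ((64/13)*zEH^70 + (-100/13)*zEH^69 + (67/13)*zEH^68 + (-93/13)*zEH^67 + (120/13)*zEH^66 + (-14/13)*zEH^65 + (59/13)*zEH^64 + (-50/13)*zEH^63 + (-106/13)*zEH^62 + (-50/13)*zEH^61 + (59/13)*zEH^60 + (89/13)*zEH^59 + (17/13)*zEH^58 + (74/13)*zEH^57 + (-239/13)*zEH^56 + (237/13)*zEH^55 + (-168/13)*zEH^54 + (190/13)*zEH^53 + (-79/13)*zEH^52 + (50/13)*zEH^51 + (23/13)*zEH^50 + (-23/13)*zEH^49 + (-50/13)*zEH^48 + (-24/13)*zEH^47 + (16/13)*zEH^46 + (2)*zEH^45 + (139/13)*zEH^44 + (-206/13)*zEH^43 + (209/13)*zEH^42 + (-196/13)*zEH^41 + (223/13)*zEH^40 + (-14/13)*zEH^39 + (59/13)*zEH^38 + (-50/13)*zEH^37 + (-106/13)*zEH^36 + (-50/13)*zEH^35 + (59/13)*zEH^34 + (89/13)*zEH^33 + (17/13)*zEH^32 + (74/13)*zEH^31 + (-239/13)*zEH^30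 + (237/13)*zEH^29 + (-168/13)*zEH^28 + (190/13)*zEH^27 + (-79/13)*zEH^26 + (50/13)*zEH^25 + (23/13)*zEH^24 + (-23/13)*zEH^23 + (-50/13)*zEH^22 + (-24/13)*zEH^21 + (16/13)*zEH^20 + (2)*zEH^19 + (139/13)*zEH^18 + (-206/13)*zEH^17 + (209/13)*zEH^16 + (-196/13)*zEH^15 + (223/13)*zEH^14 + (-14/13)*zEH^13 + (59/13)*zEH^12 + (-50/13)*zEH^11 + (-106/13)*zEH^10 + (-50/13)*zEH^9 + (59/13)*zEH^8 + (89/13)*zEH^7 + (17/13)*zEH^6 + (10/13)*zEH^5 + (-139/13)*zEH^4 + (106/13)*zEH^3 + (-3)*zEH^2 + (103/13)*zEH^1 + (-103/13)) * sum13 +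
      ((-64/13)*zEH^26 + (100/13)*zEH^25 + (-67/13)*zEH^24 + (93/13)*zEH^23 + (-120/13)*zEH^22 + (6)*zEH^21 + (-159/13)*zEH^20 + (9)*zEH^19 + (1)*zEH^18 + (170/13)*zEH^17 + (-137/13)*zEH^16 + (70/13)*zEH^15 + (-134/13)*zEH^14 + (-87/13)*zEH^13 + (69/13)*zEH^12 + (-100/13)*zEH^11 + (98/13)*zEH^10 + (-56/13)*zEH^9 + (166/13)*zEH^8 + (-119/13)*zEH^7 + (77/13)*zEH^6 + (-75/13)*zEH^5 + (106/13)*zEH^4 + (-142/13)*zEH^3 + (103/13)*zEH^2 + (-103/13)*zEH^1) * sum5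
  exact_mod_cast hC

lemma vsum : v₁ + v₂ + v₃ = 0 := by
  rw [v₁, v₂, v₃]; ring

theorem stmt_17 :
    (169 * v₁ ^ 3 - 13 * v₁ - 1 = 0) ∧
    (169 * v₂ ^ 3 - 13 * v₂ - 1 = 0) ∧
    (169 * v₃ ^ 3 - 13 * v₃ - 1 = 0) ∧
    v₁ ≠ v₂ ∧ v₁ ≠ v₃ ∧ v₂ ≠ v₃ := by
  have e1 := root_1
  have e2 := root_2
  have e3 := root_3
  have hs := vsum
  refine ⟨e1, e2, e3, ?_, ?_, ?_⟩
  · intro h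
    have h3 : v₃ = -2 * v₁ := by rw [h] at hs ⊢; linarith
    rw [h3] at e3
    have hv : v₁ = -3/26 := by linear_combination (-(1:ℝ)/78) * e3 - (8/78) * e1
    rw [hv] at e1; norm_num at e1
  · intro h
    have h2 : v₂ = -2 * v₁ := by rw [h] at hs ⊢; linarith
    rw [h2] at e2
    have hv : v₁ = -3/26 := by linear_combination (-(1:ℝ)/78) * e2 - (8/78) * e1
    rw [hv] at e1; norm_num at e1
  · intro h
    have h1 : v₁ = -2 * v₂ := by rw [h] at hs ⊢; linarith
    rw [h1] at e1
    have hv : v₂ = -3/26 := by linear_combination (-(1:ℝ)/78) * e1 - (8/78) * e2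
    rw [hv] at e2; norm_num at e2
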